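/- arXiv:1607.08712 — 5 statements merged into one kernel-verified Lean document; each statement's English description precedes it below -/
import Mathlib

section
/- For every natural number n ≥ 1 and every x ∈ [0,1], the function f_n(x) = (1/A_n) ∫₀^{√(1-x)} uⁿ/√(1-u²) du, where A_n = (1/2)·B((n+1)/2, 1/2) (B the Beta function), satisfies f_n(x) ≤ exp(-m(n)·x/2) with m(n) = (√(n-1)+1)². -/
open Real MeasureTheory Set intervalIntegral

/-- The Euler Beta function, `B(a,b) = Γ(a)Γ(b)/Γ(a+b)`. -/
noncomputable def realBeta (a b : ℝ) : ℝ := Real.Gamma a * Real.Gamma b / Real.Gamma (a + b)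

open Real MeasureTheory Set intervalIntegral


lemma wInt (a : ℝ) (ha : 0 ≤ a) :
    IntervalIntegrable (fun t : ℝ => (1 - t) ^ a * t ^ (-(1/2) : ℝ)) volume 0 1 := by
  apply IntervalIntegrable.mono_fun (intervalIntegrable_rpow' (by norm_num : (-1:ℝ) < -(1/2)))
  · apply Measurable.aestronglyMeasurable
    fun_prop
  · filter_upwards [ae_restrict_mem measurableSet_uIoc] with t ht
    rw [uIoc_of_le (by norm_num : (0:ℝ) ≤ 1)] at ht
    have h1 : 0 ≤ (1 : ℝ) - t := by linarith [ht.2]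
    have h2 : (0:ℝ) ≤ t := le_of_lt ht.1
    simp only [norm_eq_abs]
    rw [abs_of_nonneg (mul_nonneg (rpow_nonneg h1 a) (rpow_nonneg h2 _)),
      abs_of_nonneg (rpow_nonneg h2 _)]
    have : (1 - t) ^ a ≤ 1 := Real.rpow_le_one h1 (by linarith [ht.1]) ha
    nlinarith [rpow_nonneg h2 (-(1/2):ℝ)]


lemma beta_eq (p : ℝ) (hp : 0 < p) :
    Real.Gamma p * Real.Gamma (1/2) / Real.Gamma (p + 1/2)
      = ∫ t in (0:ℝ)..1, (1 - t) ^ (p - 1) * t ^ (-(1/2) : ℝ) := by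
  have h := Complex.Gamma_mul_Gamma_eq_betaIntegral (s := (1/2 : ℂ)) (t := (p : ℂ))
    (by norm_num) (by simpa using hp)
  have hbeta : Complex.betaIntegral (1/2) (p : ℂ)
      = ((∫ t in (0:ℝ)..1, (1 - t) ^ (p - 1) * t ^ (-(1/2) : ℝ) : ℝ) : ℂ) := by
    rw [Complex.betaIntegral, ← intervalIntegral.integral_ofReal]
    apply intervalIntegral.integral_congr
    intro t ht
    rw [uIcc_of_le (by norm_num : (0:ℝ) ≤ 1)] at ht
    have h0 : (0:ℝ) ≤ t := ht.1
    have h1 : (0:ℝ) ≤ 1 - t := by linarith [ht.2]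
    push_cast
    rw [Complex.ofReal_cpow h0, Complex.ofReal_cpow h1]
    push_cast
    rw [mul_comm]
    norm_num
  rw [hbeta] at h
  rw [Complex.Gamma_ofReal] at h
  have hph : ((1:ℂ)/2) = ((1/2 : ℝ) : ℂ) := by norm_num
  rw [hph, Complex.Gamma_ofReal, show ((1/2:ℝ):ℂ) + (p:ℂ) = ((1/2 + p : ℝ) : ℂ) by push_cast; ring,
    Complex.Gamma_ofReal] at h
  have h' : Real.Gamma (1/2) * Real.Gamma p
      = Real.Gamma (1/2 + p) * ∫ t in (0:ℝ)..1, (1 - t) ^ (p - 1) * t ^ (-(1/2) : ℝ) := by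
    exact_mod_cast h
  have hG : Real.Gamma (1/2 + p) ≠ 0 := (Real.Gamma_pos_of_pos (by linarith)).ne'
  rw [show p + 1/2 = 1/2 + p by ring, div_eq_iff hG]
  linear_combination h'


lemma F_anti (a m : ℝ) (ha : 0 ≤ a) (hm : m = (Real.sqrt (2*a) + 1)^2) :
    AntitoneOn (fun t : ℝ => (1 - t) ^ a * t ^ (-(1/2) : ℝ) * Real.exp (m * t / 2))
      (Ioo (0:ℝ) 1) := by
  have hder : ∀ t ∈ Ioo (0:ℝ) 1, HasDerivAt
      (fun t : ℝ => (1 - t) ^ a * t ^ (-(1/2) : ℝ) * Real.exp (m * t / 2))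
      ((((a * (1-t) ^ (a-1)) * (-1)) * t ^ (-(1/2):ℝ)
          + (1 - t) ^ a * ((-(1/2)) * t ^ ((-(1/2)) - 1 : ℝ))) * Real.exp (m * t / 2)
        + (1 - t) ^ a * t ^ (-(1/2):ℝ) * (Real.exp (m * t / 2) * (m/2))) t := by
    intro t ht
    obtain ⟨ht0, ht1⟩ := ht
    have h1t : (0:ℝ) < 1 - t := by linarith
    have h1 : HasDerivAt (fun t : ℝ => (1 - t) ^ a) ((a * (1-t) ^ (a-1)) * (-1)) t :=
      (Real.hasDerivAt_rpow_const (Or.inl h1t.ne')).comp t ((hasDerivAt_id t).const_sub 1)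
    have h2 : HasDerivAt (fun t : ℝ => t ^ (-(1/2) : ℝ)) ((-(1/2)) * t ^ ((-(1/2)) - 1 : ℝ)) t :=
      Real.hasDerivAt_rpow_const (Or.inl ht0.ne')
    have h3 : HasDerivAt (fun t : ℝ => Real.exp (m * t / 2)) (Real.exp (m * t / 2) * (m/2)) t := by
      have hin : HasDerivAt (fun t : ℝ => m * t / 2) (m/2) t := by
        simpa using ((hasDerivAt_id t).const_mul m).div_const 2
      exact (Real.hasDerivAt_exp _).comp t hin
    exact (h1.mul h2).mul h3
  apply antitoneOn_of_deriv_nonpos (convex_Ioo 0 1)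
  · intro t ht
    exact ((hder t ht).continuousAt).continuousWithinAt
  · intro t ht
    rw [interior_Ioo] at ht
    exact ((hder t ht).differentiableAt).differentiableWithinAt
  · intro t ht
    rw [interior_Ioo] at ht
    obtain ⟨ht0, ht1⟩ := ht
    have h1t : (0:ℝ) < 1 - t := by linarith
    rw [(hder t ⟨ht0, ht1⟩).deriv]
    set A1 := (1 - t) ^ (a - 1) with hA1
    set B1 := t ^ ((-(1/2)) - 1 : ℝ) with hB1
    set E := Real.exp (m * t / 2) with hE
    have e1 : (1 - t) ^ a = A1 * (1 - t) := by
      rw [hA1, ← Real.rpow_add_one h1t.ne' (a-1)]; ring_nf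
    have e2 : t ^ (-(1/2) : ℝ) = B1 * t := by
      rw [hB1, ← Real.rpow_add_one ht0.ne' ((-(1/2))-1)]; ring_nf
    have hA1p : 0 < A1 := Real.rpow_pos_of_pos h1t _
    have hB1p : 0 < B1 := Real.rpow_pos_of_pos ht0 _
    have hEp : 0 < E := Real.exp_pos _
    have key : m * (t * (1 - t)) ≤ 2 * a * t + (1 - t) := by
      subst hm
      have hc : Real.sqrt (2*a) ^ 2 = 2 * a := Real.sq_sqrt (by linarith)
      nlinarith [sq_nonneg (Real.sqrt (2*a) * t - (1 - t)), hc, Real.sqrt_nonneg (2*a), ht0, ht1]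
    rw [e1, e2]
    calc (a * A1 * (-1) * (B1 * t) + A1 * (1 - t) * ((-(1/2)) * B1)) * E
        + A1 * (1 - t) * (B1 * t) * (E * (m/2))
        = (A1 * B1 * E) * ((m * (t * (1-t)) - (2*a*t + (1-t))) / 2) := by ring
      _ ≤ 0 := mul_nonpos_of_nonneg_of_nonpos (by positivity) (by linarith)

lemma tail_bound (a m x : ℝ) (ha : 0 ≤ a) (hm : m = (Real.sqrt (2*a) + 1)^2)
    (hx0 : 0 ≤ x) (hx1 : x ≤ 1) :
    (∫ t in x..1, (1 - t) ^ a * t ^ (-(1/2) : ℝ))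
      ≤ Real.exp (-(m*x)/2) * ∫ t in (0:ℝ)..1, (1 - t) ^ a * t ^ (-(1/2) : ℝ) := by
  set w : ℝ → ℝ := fun t => (1 - t) ^ a * t ^ (-(1/2) : ℝ) with hw
  have hwInt : IntervalIntegrable w volume 0 1 := wInt a ha
  have hwx : IntervalIntegrable w volume x 1 :=
    hwInt.mono_set (by
      rw [uIcc_of_le hx1, uIcc_of_le (by norm_num : (0:ℝ) ≤ 1)]
      exact Icc_subset_Icc hx0 le_rfl)
  have hshift : (∫ t in x..1, w t) = ∫ t in (0:ℝ)..(1-x), w (t + x) := by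
    rw [intervalIntegral.integral_comp_add_right]
    norm_num
  rw [hshift]
  have hint1 : IntervalIntegrable (fun t => w (t + x)) volume 0 (1-x) := by
    have := hwx.comp_add_right x
    simpa using this
  have hint2 : IntervalIntegrable (fun t => Real.exp (-(m*x)/2) * w t) volume 0 (1-x) :=
    (hwInt.mono_set (by
      rw [uIcc_of_le (by linarith : (0:ℝ) ≤ 1-x), uIcc_of_le (by norm_num : (0:ℝ) ≤ 1)]
      exact Icc_subset_Icc le_rfl (by linarith))).const_mul _
  have step1 : (∫ t in (0:ℝ)..(1-x), w (t + x))
      ≤ ∫ t in (0:ℝ)..(1-x), Real.exp (-(m*x)/2) * w t := by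
    apply intervalIntegral.integral_mono_ae_restrict (by linarith) hint1 hint2
    have hsub : Icc (0:ℝ) (1-x) =ᵐ[volume] Ioo (0:ℝ) (1-x) := Ioo_ae_eq_Icc.symm
    rw [Measure.restrict_congr_set hsub]
    apply ae_restrict_of_forall_mem measurableSet_Ioo
    intro t ht
    obtain ⟨ht0, ht1⟩ := ht
    have hmem1 : t ∈ Ioo (0:ℝ) 1 := ⟨ht0, by linarith⟩
    have hmem2 : t + x ∈ Ioo (0:ℝ) 1 := ⟨by linarith, by linarith⟩
    have hF := F_anti a m ha hm hmem1 hmem2 (by linarith)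
    simp only at hF
    have hEp : (0:ℝ) < Real.exp (m * (t+x) / 2) := Real.exp_pos _
    have hkey : Real.exp (m * (t + x) / 2) * Real.exp (-(m*x)/2) = Real.exp (m * t / 2) := by
      rw [← Real.exp_add]; ring_nf
    have hwnn : 0 ≤ w t := by
      apply mul_nonneg (Real.rpow_nonneg (by linarith [hmem1.2]) _)
        (Real.rpow_nonneg ht0.le _)
    rw [hw]
    simp only
    have h3 : (1 - t) ^ a * t ^ (-(1/2):ℝ) * Real.exp (m * t / 2)
        = (Real.exp (-(m*x)/2) * ((1 - t) ^ a * t ^ (-(1/2):ℝ))) * Real.exp (m * (t+x) / 2) := by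
      rw [← hkey]; ring
    rw [h3] at hF
    exact le_of_mul_le_mul_right hF hEp
  apply step1.trans
  rw [intervalIntegral.integral_const_mul]
  apply mul_le_mul_of_nonneg_left _ (Real.exp_pos _).le
  apply intervalIntegral.integral_mono_interval le_rfl (by linarith) (by linarith) _ hwInt
  apply ae_restrict_of_forall_mem measurableSet_Ioc
  intro t ht
  exact mul_nonneg (Real.rpow_nonneg (by linarith [ht.2]) _) (Real.rpow_nonneg ht.1.le _)


lemma subst_eq (n : ℕ) (hn : 1 ≤ n) (x : ℝ) (hx0 : 0 ≤ x) (hx1 : x ≤ 1) :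
    (∫ u in (0:ℝ)..Real.sqrt (1-x), u ^ n / Real.sqrt (1 - u^2))
      = (1/2) * ∫ t in x..1, (1-t) ^ (((n:ℝ)-1)/2) * t ^ (-(1/2):ℝ) := by
  set c : ℝ := ((n:ℝ)-1)/2 with hc
  set s₀ : ℝ := Real.sqrt (1-x) with hs₀
  have hs₀sq : s₀^2 = 1 - x := Real.sq_sqrt (by linarith)
  have hs₀0 : 0 ≤ s₀ := Real.sqrt_nonneg _
  have hs₀1 : s₀ ≤ 1 := Real.sqrt_le_one.mpr (by linarith)
  have himg : (fun u : ℝ => 1 - u^2) '' Ioo 0 s₀ = Ioo x 1 := by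
    ext t
    constructor
    · rintro ⟨u, ⟨hu0, hus⟩, rfl⟩
      simp only [mem_Ioo]
      have husq : u^2 < s₀^2 := by nlinarith
      constructor
      · nlinarith
      · nlinarith [pow_pos hu0 2]
    · rintro ⟨htx, ht1⟩
      refine ⟨Real.sqrt (1-t), ⟨Real.sqrt_pos.2 (by linarith), ?_⟩, ?_⟩
      · rw [hs₀]
        exact Real.sqrt_lt_sqrt (by linarith) (by linarith)
      · simp only
        rw [Real.sq_sqrt (by linarith)]; ring
  have hderiv : ∀ u ∈ Ioo (0:ℝ) s₀,
      HasDerivWithinAt (fun u : ℝ => 1 - u^2) (-(2*u)) (Ioo 0 s₀) u := by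
    intro u _
    have : HasDerivAt (fun u : ℝ => 1 - u^2) (-(2*u)) u := by
      simpa using ((hasDerivAt_pow 2 u).const_sub 1)
    exact this.hasDerivWithinAt
  have hinj : InjOn (fun u : ℝ => 1 - u^2) (Ioo 0 s₀) := by
    intro u hu v hv h
    simp only at h
    have h2 : (u - v) * (u + v) = 0 := by linear_combination -h
    rcases mul_eq_zero.1 h2 with h3 | h3
    · linarith
    · linarith [hu.1, hv.1]
  have key := MeasureTheory.integral_image_eq_integral_abs_deriv_smul measurableSet_Ioo
    hderiv hinj (fun t => (1-t) ^ c * t ^ (-(1/2):ℝ))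
  rw [himg] at key
  have hcongr : ∀ u ∈ Ioo (0:ℝ) s₀,
      |(-(2*u))| • ((1 - (1-u^2)) ^ c * (1-u^2) ^ (-(1/2):ℝ))
        = 2 * (u ^ n / Real.sqrt (1 - u^2)) := by
    intro u ⟨hu0, hus⟩
    have hu2 : (0:ℝ) < 1 - u^2 := by nlinarith
    have e1 : ((1:ℝ) - (1 - u^2)) = u^2 := by ring
    have e2 : ((u^2 : ℝ)) ^ c = u ^ (n-1) := by
      rw [show (u^2 : ℝ) = u ^ ((2:ℕ):ℝ) by rw [Real.rpow_natCast],
        ← Real.rpow_mul hu0.le]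
      rw [show ((2:ℕ):ℝ) * c = ((n:ℝ)-1) by rw [hc]; push_cast; ring]
      rw [show ((n:ℝ)-1) = ((n-1 : ℕ) : ℝ) by push_cast [hn]; ring]
      exact Real.rpow_natCast u (n-1)
    have e3 : ((1:ℝ) - u^2) ^ (-(1/2):ℝ) = (Real.sqrt (1 - u^2))⁻¹ := by
      rw [Real.rpow_neg hu2.le, Real.sqrt_eq_rpow]
    have e4 : u ^ (n-1) * u = u ^ n := by
      rw [← pow_succ]
      congr 1
      omega
    rw [e1, e2, e3, smul_eq_mul, abs_of_nonpos (by linarith), div_eq_mul_inv, ← e4]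
    ring
  rw [MeasureTheory.setIntegral_congr_fun measurableSet_Ioo hcongr] at key
  rw [intervalIntegral.integral_of_le hx1, intervalIntegral.integral_of_le hs₀0,
    MeasureTheory.integral_Ioc_eq_integral_Ioo, MeasureTheory.integral_Ioc_eq_integral_Ioo,
    key, MeasureTheory.integral_const_mul]
  ring

theorem stmt2 (n : ℕ) (hn : 1 ≤ n) (x : ℝ) (hx : x ∈ Set.Icc (0 : ℝ) 1) :
    (1 / ((1 / 2) * realBeta ((n + 1) / 2) (1 / 2)))
        * ∫ u in (0:ℝ)..Real.sqrt (1 - x), u ^ n / Real.sqrt (1 - u ^ 2)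
      ≤ Real.exp (-(Real.sqrt ((n : ℝ) - 1) + 1) ^ 2 * x / 2) := by
  obtain ⟨hx0, hx1⟩ := hx
  have hn1 : (1:ℝ) ≤ (n:ℝ) := by exact_mod_cast hn
  have ha : (0:ℝ) ≤ ((n:ℝ)-1)/2 := by linarith
  have hB : realBeta (((n:ℝ)+1)/2) (1/2)
      = ∫ t in (0:ℝ)..1, (1-t) ^ (((n:ℝ)-1)/2) * t ^ (-(1/2):ℝ) := by
    have h := beta_eq (((n:ℝ)+1)/2) (by linarith)
    rw [show (((n:ℝ)+1)/2) - 1 = ((n:ℝ)-1)/2 by ring] at h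
    rw [realBeta]
    exact h
  have hpos : 0 < realBeta (((n:ℝ)+1)/2) (1/2) := by
    rw [realBeta]
    have h1 : 0 < Real.Gamma (((n:ℝ)+1)/2) := Real.Gamma_pos_of_pos (by linarith)
    have h2 : 0 < Real.Gamma (1/2 : ℝ) := Real.Gamma_pos_of_pos (by norm_num)
    have h3 : 0 < Real.Gamma (((n:ℝ)+1)/2 + 1/2) := Real.Gamma_pos_of_pos (by linarith)
    positivity
  have htail := tail_bound (((n:ℝ)-1)/2) ((Real.sqrt ((n:ℝ)-1)+1)^2) x ha
    (by rw [show 2*(((n:ℝ)-1)/2) = (n:ℝ)-1 by ring]) hx0 hx1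
  rw [subst_eq n hn x hx0 hx1]
  rw [show (1 / ((1/2) * realBeta (((n:ℝ)+1)/2) (1/2)))
      * ((1/2) * ∫ t in x..1, (1-t) ^ (((n:ℝ)-1)/2) * t ^ (-(1/2):ℝ))
    = (∫ t in x..1, (1-t) ^ (((n:ℝ)-1)/2) * t ^ (-(1/2):ℝ)) / realBeta (((n:ℝ)+1)/2) (1/2)
    by field_simp]
  rw [div_le_iff₀ hpos]
  calc (∫ t in x..1, (1-t) ^ (((n:ℝ)-1)/2) * t ^ (-(1/2):ℝ))
      ≤ Real.exp (-((Real.sqrt ((n:ℝ)-1)+1)^2 * x)/2)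
        * ∫ t in (0:ℝ)..1, (1-t) ^ (((n:ℝ)-1)/2) * t ^ (-(1/2):ℝ) := htail
    _ = Real.exp (-(Real.sqrt ((n:ℝ)-1)+1)^2 * x / 2) * realBeta (((n:ℝ)+1)/2) (1/2) := by
        rw [hB]
        congr 1
        ring_nf
end

section
/- For integers r ≥ 1 and L ≥ r, the polynomial P(L,p,r) = Σ_{j=0}^{r} (-1)^j · C(r,j) · (1 - jp)^L satisfies the recursion ∂P(L,p,r)/∂p = L·r·(1-p)^{L-1} · P(L-1, p/(1-p), r-1), and on p ∈ [0, 1/r], P(L,p,r) is nonnegative and monotonically increasing in p. -/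
open scoped BigOperators

/-- The polynomial `P(L,p,r) = ∑_{j=0}^{r} (-1)^j C(r,j) (1 - j p)^L`. -/
noncomputable def Ppoly (L : ℕ) (p : ℝ) (r : ℕ) : ℝ :=
  ∑ j ∈ Finset.range (r + 1), (-1 : ℝ) ^ j * (r.choose j : ℝ) * (1 - (j : ℝ) * p) ^ L

/-! Differentiating term by term, the `j = 0` term drops out, and `j C(r,j) = r C(r-1,j-1)`
together with `(1 - p) (1 - (j-1) p/(1-p)) = 1 - j p` turns the rest into
`L r (1-p)^(L-1) P(L-1, p/(1-p), r-1)`. As `p ↦ p/(1-p)` maps `[0, 1/r]` into `[0, 1/(r-1)]`,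
induction on `r` makes this derivative nonnegative on `[0, 1/r]`, so `P(L, ·, r)` is monotone
there; nonnegativity follows from `P(L, 0, r) = 0` for `r ≥ 1`, the inclusion–exclusion identity
`∑ (-1)^j C(r,j) = 0`. -/

open Finset Set

lemma Ppoly_zero_right (L : ℕ) (p : ℝ) : Ppoly L p 0 = 1 := by
  simp [Ppoly]

lemma Ppoly_zero_succ (L r : ℕ) : Ppoly L 0 (r + 1) = 0 := by
  simpa [Ppoly] using congrArg (Int.cast : ℤ → ℝ)
    (Int.alternating_sum_range_choose_of_ne r.succ_ne_zero)

lemma continuous_Ppoly (L r : ℕ) : Continuous (fun p : ℝ => Ppoly L p r) := by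
  unfold Ppoly
  fun_prop

lemma hasDerivAt_Ppoly (L r : ℕ) {p : ℝ} (hp : p ≠ 1) :
    HasDerivAt (fun q : ℝ => Ppoly L q r)
      ((L : ℝ) * (r : ℝ) * (1 - p) ^ (L - 1) * Ppoly (L - 1) (p / (1 - p)) (r - 1)) p := by
  cases r with
  | zero => simpa [Ppoly_zero_right] using hasDerivAt_const p (1 : ℝ)
  | succ s =>
    have hterm (j : ℕ) :
        HasDerivAt (fun q : ℝ => (-1 : ℝ) ^ j * ((s + 1).choose j : ℝ) * (1 - j * q) ^ L)
        ((-1) ^ j * ((s + 1).choose j : ℝ) * (L * (1 - j * p) ^ (L - 1) * -j)) p := by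
      simpa using ((((hasDerivAt_id p).const_mul (j : ℝ)).const_sub 1).pow L).const_mul
        ((-1 : ℝ) ^ j * ((s + 1).choose j : ℝ))
    refine (HasDerivAt.fun_sum fun j _ => hterm j).congr_deriv ?_
    rw [sum_range_succ', Ppoly, mul_sum]
    simp only [Nat.cast_zero, neg_zero, mul_zero, add_zero, Nat.add_sub_cancel]
    refine sum_congr rfl fun i _ => ?_
    have hp' : 1 - p ≠ 0 := sub_ne_zero.mpr hp.symm
    have hchoose : ((s + 1).choose (i + 1) : ℝ) * (i + 1 : ℕ) = (s + 1 : ℕ) * s.choose i := by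
      exact_mod_cast (Nat.add_one_mul_choose_eq s i).symm
    have hshift : (1 - p) * (1 - i * (p / (1 - p))) = 1 - (i + 1 : ℕ) * p := by
      field_simp
      push_cast
      ring
    rw [← hshift, mul_pow]
    linear_combination
      (-1) ^ i * (L : ℝ) * (1 - p) ^ (L - 1) * (1 - i * (p / (1 - p))) ^ (L - 1) * hchoose

lemma monotoneOn_Ppoly_succ (L s : ℕ)
    (hs : ∀ (M : ℕ) (q : ℝ), 0 ≤ q → q * s ≤ 1 → 0 ≤ Ppoly M q s) :
    MonotoneOn (fun p : ℝ => Ppoly L p (s + 1)) (Icc 0 (1 / ((s + 1 : ℕ) : ℝ))) := by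
  have hinterior : ∀ x ∈ interior (Icc (0 : ℝ) (1 / ((s + 1 : ℕ) : ℝ))),
      0 < x ∧ x * (s + 1) < 1 := by
    intro x hx
    rw [interior_Icc, Set.mem_Ioo, lt_div_iff₀ (by positivity)] at hx
    exact_mod_cast hx
  have hlt_one : ∀ x ∈ interior (Icc (0 : ℝ) (1 / ((s + 1 : ℕ) : ℝ))), x < 1 :=
    fun x hx => by nlinarith [hinterior x hx, (s.cast_nonneg : (0 : ℝ) ≤ s)]
  refine monotoneOn_of_hasDerivWithinAt_nonneg (convex_Icc _ _)
    (continuous_Ppoly L _).continuousOn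
    (fun x hx => (hasDerivAt_Ppoly L (s + 1) (hlt_one x hx).ne).hasDerivWithinAt) fun x hx => ?_
  obtain ⟨hx0, hxs⟩ := hinterior x hx
  have hx1 : 0 < 1 - x := sub_pos.mpr (hlt_one x hx)
  have hq : 0 ≤ Ppoly (L - 1) (x / (1 - x)) s :=
    hs _ _ (div_nonneg hx0.le hx1.le) (by rw [div_mul_eq_mul_div, div_le_one hx1]; linarith)
  simp only [Nat.add_sub_cancel]
  positivity

lemma Ppoly_nonneg (L r : ℕ) {p : ℝ} (hp : 0 ≤ p) (hpr : p * r ≤ 1) :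
    0 ≤ Ppoly L p r := by
  induction r generalizing L p with
  | zero => simp [Ppoly_zero_right]
  | succ s ih =>
    have hmem : p ∈ Icc 0 (1 / ((s + 1 : ℕ) : ℝ)) :=
      ⟨hp, by rwa [le_div_iff₀ (by positivity)]⟩
    simpa [Ppoly_zero_succ] using
      monotoneOn_Ppoly_succ L s (fun M q => ih M) ⟨le_rfl, by positivity⟩ hmem hp

lemma monotoneOn_Ppoly (L r : ℕ) :
    MonotoneOn (fun p : ℝ => Ppoly L p r) (Icc 0 (1 / (r : ℝ))) := by
  cases r with
  | zero => simp [Ppoly_zero_right]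
  | succ s => exact monotoneOn_Ppoly_succ L s fun M q => Ppoly_nonneg M s

theorem stmt9_general (L r : ℕ) :
    (∀ p : ℝ, p ≠ 1 →
        HasDerivAt (fun q : ℝ => Ppoly L q r)
          ((L : ℝ) * (r : ℝ) * (1 - p) ^ (L - 1) * Ppoly (L - 1) (p / (1 - p)) (r - 1)) p)
      ∧ (∀ p ∈ Set.Icc (0 : ℝ) (1 / (r : ℝ)), 0 ≤ Ppoly L p r)
      ∧ MonotoneOn (fun p : ℝ => Ppoly L p r) (Set.Icc (0 : ℝ) (1 / (r : ℝ))) := by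
  refine ⟨fun p hp => hasDerivAt_Ppoly L r hp, fun p hp => Ppoly_nonneg L r hp.1 ?_,
    monotoneOn_Ppoly L r⟩
  rcases r.eq_zero_or_pos with rfl | hr
  · simp
  · exact (le_div_iff₀ (by exact_mod_cast hr)).mp hp.2

theorem stmt9 (L r : ℕ) (hr : 1 ≤ r) (hL : r ≤ L) :
    (∀ p : ℝ, p ≠ 1 →
        HasDerivAt (fun q : ℝ => Ppoly L q r)
          ((L : ℝ) * (r : ℝ) * (1 - p) ^ (L - 1) * Ppoly (L - 1) (p / (1 - p)) (r - 1)) p)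
      ∧ (∀ p ∈ Set.Icc (0 : ℝ) (1 / (r : ℝ)), 0 ≤ Ppoly L p r)
      ∧ MonotoneOn (fun p : ℝ => Ppoly L p r) (Set.Icc (0 : ℝ) (1 / (r : ℝ))) :=
  stmt9_general L r
end

section
/- Let X₁,…,X_r be multinomial counts from K independent trials with cell probabilities p₁ = ⋯ = p_r = p, p_{r+1} = 1 - rp, 0 ≤ p ≤ 1/r. Then P(X₁ ≥ 2, …, X_r ≥ 2) = Σ_{k=0}^{r} (-1)^k · C(r,k) · Σ_{j=0}^{k} C(k,j) · (K!/(K-j)!) · p^j · (1 - kp)^{K-j}. -/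
/-!
Inclusion–exclusion over the set `T` of cells receiving at most one trial reduces the event to
the events "every cell of `T` receives at most one trial". When the `k` cells of `T` have weight
`p` and the others total weight `q`, the weight `F K k` of that event satisfies
`F (K+1) k = k p F K (k-1) + q F K k`: condition on the first trial, and note that once it lands
in a cell of `T` that cell must stay empty, i.e. may be given weight `0`. The closed form
`∑ j, C(k,j) K^{(j)} p^j q^(K-j)` satisfies the same recursion.
-/

open scoped BigOperators Classical

open Finset

section

variable {R : Type*} [CommRing R]

theorem sum_powerset_neg_one_pow_card_mul_ite {ι : Type*} [DecidableEq ι] (s : Finset ι)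
    (P : ι → Prop) [DecidablePred P] (a : R) :
    ∑ t ∈ s.powerset, (-1 : R) ^ #t * (if ∀ i ∈ t, P i then a else 0)
      = if ∀ i ∈ s, ¬ P i then a else 0 := by
  have hsub : ∀ t ∈ s.powerset, (-1 : R) ^ #t * (if ∀ i ∈ t, P i then a else 0)
      = if t ⊆ s.filter P then (-1 : R) ^ #t * a else 0 := by
    intro t ht
    have hts := mem_powerset.mp ht
    simp only [subset_iff, mem_filter, mul_ite, mul_zero]
    exact if_congr ⟨fun h i hi => ⟨hts hi, h i hi⟩, fun h i hi => (h hi).2⟩ rfl rfl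
  have hfilter : s.powerset.filter (· ⊆ s.filter P) = (s.filter P).powerset := by
    ext t
    simp only [mem_filter, mem_powerset]
    exact ⟨And.right, fun h => ⟨h.trans (filter_subset _ _), h⟩⟩
  have halt : ∑ t ∈ (s.filter P).powerset, (-1 : R) ^ #t = if s.filter P = ∅ then 1 else 0 := by
    exact_mod_cast congrArg (Int.cast : ℤ → R) sum_powerset_neg_one_pow_card
  rw [sum_congr rfl hsub, ← sum_filter, hfilter, ← sum_mul, halt]
  simp [filter_eq_empty_iff]

/-- `j` counts the cells, among the `k`, that are hit (each by a single trial). -/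
def atMostOnceSum (p q : R) (K k : ℕ) : R :=
  ∑ j ∈ range (k + 1), (k.choose j : R) * (K.descFactorial j : R) * p ^ j * q ^ (K - j)

theorem Nat.succ_descFactorial_succ_eq_add (K j : ℕ) :
    (K + 1).descFactorial (j + 1) = K.descFactorial (j + 1) + (j + 1) * K.descFactorial j := by
  rw [Nat.succ_descFactorial_succ, Nat.descFactorial_succ]
  rcases le_or_gt j K with h | h
  · rw [← Nat.add_mul]; congr 1; omega
  · simp [Nat.descFactorial_of_lt h]

theorem atMostOnceSum_zero_left (p q : R) (k : ℕ) : atMostOnceSum p q 0 k = 1 := by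
  rw [atMostOnceSum, sum_range_succ']
  simp

theorem descFactorial_mul_pow_succ_left (q : R) (K j : ℕ) :
    ((K + 1).descFactorial (j + 1) : R) * q ^ (K - j)
      = q * (K.descFactorial (j + 1) * q ^ (K - (j + 1)))
        + (j + 1) * (K.descFactorial j * q ^ (K - j)) := by
  rw [Nat.succ_descFactorial_succ_eq_add]
  rcases le_or_gt (j + 1) K with h | h
  · rw [show K - j = K - (j + 1) + 1 by omega]
    push_cast; ring
  · rw [Nat.descFactorial_of_lt h]
    push_cast; ring

theorem atMostOnceSum_succ_left (p q : R) (K k : ℕ) :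
    atMostOnceSum p q (K + 1) k
      = k * p * atMostOnceSum p q K (k - 1) + q * atMostOnceSum p q K k := by
  rcases k with _ | k
  · simp [atMostOnceSum, pow_succ, mul_comm]
  have hterm : ∀ j, ((k + 1).choose (j + 1) : R) * ((K + 1).descFactorial (j + 1) : R)
        * p ^ (j + 1) * q ^ (K + 1 - (j + 1))
      = (k + 1) * p * ((k.choose j : R) * K.descFactorial j * p ^ j * q ^ (K - j))
        + q * (((k + 1).choose (j + 1) : R) * K.descFactorial (j + 1) * p ^ (j + 1)
          * q ^ (K - (j + 1))) := by
    intro j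
    have hchoose : ((k + 1 : ℕ) : R) * k.choose j = (k + 1).choose (j + 1) * (j + 1 : ℕ) := by
      exact_mod_cast congrArg (Nat.cast : ℕ → R) (Nat.add_one_mul_choose_eq k j)
    rw [Nat.add_sub_add_right]
    push_cast at hchoose
    linear_combination
      ((k + 1).choose (j + 1) * p ^ (j + 1) : R) * descFactorial_mul_pow_succ_left q K j
        - (K.descFactorial j * p ^ (j + 1) * q ^ (K - j) : R) * hchoose
  simp only [atMostOnceSum]
  rw [sum_range_succ' _ (k + 1), sum_range_succ' _ (k + 1)]
  simp only [hterm, sum_add_distrib, mul_sum, mul_add, Nat.choose_zero_right,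
    Nat.descFactorial_zero, Nat.sub_zero]
  push_cast
  ring

theorem card_filter_cons_eq {α : Type*} [DecidableEq α] {K : ℕ} (x : α) (g : Fin K → α)
    (j : α) :
    #{i | (Fin.cons x g : Fin (K + 1) → α) i = j} = (if x = j then 1 else 0) + #{i | g i = j} := by
  simp only [card_filter, Fin.sum_univ_succ, Fin.cons_zero, Fin.cons_succ]

theorem sum_pi_fin_succ {α : Type*} [Fintype α] {K : ℕ} (h : (Fin (K + 1) → α) → R) :
    ∑ f, h f = ∑ x, ∑ g : Fin K → α, h (Fin.cons x g) := by
  rw [← (Fin.consEquiv fun _ => α).sum_comp, Fintype.sum_prod_type]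
  rfl

variable {α : Type*} [Fintype α] [DecidableEq α]

theorem sum_compl_erase_update_zero {S : Finset α} {x : α} (hx : x ∈ S) (w : α → R) :
    ∑ c ∈ (S.erase x)ᶜ, Function.update w x 0 c = ∑ c ∈ Sᶜ, w c := by
  rw [compl_erase, sum_insert (by simpa using hx), Function.update_self, zero_add]
  exact sum_congr rfl fun c hc => Function.update_of_ne (by rintro rfl; simp_all) _ _

theorem ite_forall_card_filter_cons_le_one_of_mem {K : ℕ} {S : Finset α} {x : α} (hx : x ∈ S)
    (w : α → R) (g : Fin K → α) :
    (if ∀ j ∈ S, #{i | (Fin.cons x g : Fin (K + 1) → α) i = j} ≤ 1 then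
        ∏ i, w ((Fin.cons x g : Fin (K + 1) → α) i) else 0)
      = w x * if ∀ j ∈ S.erase x, #{i | g i = j} ≤ 1 then
          ∏ i, Function.update w x 0 (g i) else 0 := by
  simp only [card_filter_cons_eq, Fin.prod_univ_succ, Fin.cons_zero, Fin.cons_succ]
  by_cases hg : ∃ i, g i = x
  · obtain ⟨i, hi⟩ := hg
    have hcard : 1 ≤ #{i | g i = x} := card_pos.mpr ⟨i, by simpa using hi⟩
    rw [if_neg fun h => by have := h x hx; rw [if_pos rfl] at this; omega, ite_eq_right_iff.mpr]
    · simp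
    · intro _
      exact prod_eq_zero (mem_univ i) (by simp [hi])
  · simp only [not_exists] at hg
    have hupd : ∀ i, Function.update w x 0 (g i) = w (g i) := fun i =>
      Function.update_of_ne (hg i) _ _
    have hcard : #{i | g i = x} = 0 := card_eq_zero.mpr (filter_eq_empty_iff.mpr fun i _ => hg i)
    simp only [hupd, mul_ite, mul_zero]
    refine if_congr ⟨fun h j hj => ?_, fun h j hj => ?_⟩ rfl rfl
    · have := h j (mem_of_mem_erase hj)
      rw [if_neg (ne_of_mem_erase hj).symm] at this
      omega
    · by_cases hxj : x = j
      · subst hxj; simp [hcard]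
      · rw [if_neg hxj]; exact (h j (mem_erase.mpr ⟨Ne.symm hxj, hj⟩)).trans' (by omega)

theorem ite_forall_card_filter_cons_le_one_of_notMem {K : ℕ} {S : Finset α} {x : α} (hx : x ∉ S)
    (w : α → R) (g : Fin K → α) :
    (if ∀ j ∈ S, #{i | (Fin.cons x g : Fin (K + 1) → α) i = j} ≤ 1 then
        ∏ i, w ((Fin.cons x g : Fin (K + 1) → α) i) else 0)
      = w x * if ∀ j ∈ S, #{i | g i = j} ≤ 1 then ∏ i, w (g i) else 0 := by
  simp only [card_filter_cons_eq, Fin.prod_univ_succ, Fin.cons_zero, Fin.cons_succ, mul_ite,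
    mul_zero]
  refine if_congr (forall₂_congr fun j hj => ?_) rfl rfl
  rw [if_neg (by rintro rfl; exact hx hj), zero_add]

theorem sum_ite_forall_card_filter_le_one (p : R) (K : ℕ) (w : α → R) (S : Finset α)
    (hw : ∀ c ∈ S, w c = p) :
    ∑ f : Fin K → α, (if ∀ j ∈ S, #{i | f i = j} ≤ 1 then ∏ i, w (f i) else 0)
      = atMostOnceSum p (∑ c ∈ Sᶜ, w c) K #S := by
  induction K generalizing w S with
  | zero => simp [atMostOnceSum_zero_left]
  | succ K ih =>
    have hmem : ∀ x ∈ S, ∑ g : Fin K → α,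
        (if ∀ j ∈ S, #{i | (Fin.cons x g : Fin (K + 1) → α) i = j} ≤ 1 then
          ∏ i, w ((Fin.cons x g : Fin (K + 1) → α) i) else 0)
        = p * atMostOnceSum p (∑ c ∈ Sᶜ, w c) K (#S - 1) := by
      intro x hx
      have hw' : ∀ c ∈ S.erase x, Function.update w x 0 c = p := fun c hc => by
        rw [Function.update_of_ne (ne_of_mem_erase hc), hw c (mem_of_mem_erase hc)]
      simp only [ite_forall_card_filter_cons_le_one_of_mem hx, ← mul_sum, ih _ _ hw',
        sum_compl_erase_update_zero hx, card_erase_of_mem hx, hw x hx]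
    have hnotMem : ∀ x ∈ Sᶜ, ∑ g : Fin K → α,
        (if ∀ j ∈ S, #{i | (Fin.cons x g : Fin (K + 1) → α) i = j} ≤ 1 then
          ∏ i, w ((Fin.cons x g : Fin (K + 1) → α) i) else 0)
        = w x * atMostOnceSum p (∑ c ∈ Sᶜ, w c) K #S := by
      intro x hx
      simp only [ite_forall_card_filter_cons_le_one_of_notMem (mem_compl.mp hx), ← mul_sum,
        ih _ _ hw]
    rw [sum_pi_fin_succ, ← sum_add_sum_compl S, sum_congr rfl hmem, sum_congr rfl hnotMem,
      sum_const, ← sum_mul, atMostOnceSum_succ_left, nsmul_eq_mul, mul_assoc]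

theorem sum_compl_eq_one_sub_card_mul {w : α → R} {S T : Finset α} {p : R} (hT : T ⊆ S)
    (hw : ∀ c ∈ S, w c = p) (hsum : ∑ c, w c = 1) :
    ∑ c ∈ Tᶜ, w c = 1 - #T * p := by
  rw [← hsum, ← sum_add_sum_compl T, sum_congr rfl fun c hc => hw c (hT hc), sum_const,
    nsmul_eq_mul]
  ring

theorem sum_ite_forall_one_lt_card_filter (p : R) (K : ℕ) (w : α → R) (S : Finset α)
    (hw : ∀ c ∈ S, w c = p) (hsum : ∑ c, w c = 1) :
    ∑ f : Fin K → α, (if ∀ j ∈ S, 1 < #{i | f i = j} then ∏ i, w (f i) else 0)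
      = ∑ k ∈ range (#S + 1),
          (-1) ^ k * ((#S).choose k : R) * atMostOnceSum p (1 - k * p) K k := by
  calc _ = ∑ f : Fin K → α, ∑ T ∈ S.powerset,
        (-1) ^ #T * (if ∀ j ∈ T, #{i | f i = j} ≤ 1 then ∏ i, w (f i) else 0) := by
        refine sum_congr rfl fun f _ => ?_
        convert (sum_powerset_neg_one_pow_card_mul_ite S (fun j => #{i | f i = j} ≤ 1)
          (∏ i, w (f i))).symm using 4
        simp only [not_le]
    _ = ∑ T ∈ S.powerset, (-1) ^ #T * atMostOnceSum p (1 - #T * p) K #T := by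
        rw [sum_comm]
        refine sum_congr rfl fun T hT => ?_
        have hTS := mem_powerset.mp hT
        rw [← mul_sum, sum_ite_forall_card_filter_le_one p K w T fun c hc => hw c (hTS hc),
          sum_compl_eq_one_sub_card_mul hTS hw hsum]
    _ = _ := by
        rw [sum_powerset_apply_card fun k => (-1) ^ k * atMostOnceSum p (1 - k * p) K k]
        simp only [nsmul_eq_mul, mul_assoc, mul_left_comm]

end

theorem stmt11_general (K r : ℕ) (p : ℝ) :
    -- The probability that every one of the r cells receives at least two of the K i.i.d.
    -- trials, where each trial lands in each of the first r cells with probability p and in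
    -- the dump cell with probability 1 - r p.
    (∑ f : Fin K → Fin (r + 1),
        (if ∀ j : Fin (r + 1), (j : ℕ) < r →
            ∃ i₁ i₂ : Fin K, i₁ ≠ i₂ ∧ f i₁ = j ∧ f i₂ = j then
          ∏ i : Fin K, (if (f i : ℕ) < r then p else 1 - (r : ℝ) * p)
        else 0))
      = ∑ k ∈ Finset.range (r + 1), (-1 : ℝ) ^ k * (r.choose k : ℝ) *
          ∑ j ∈ Finset.range (k + 1), (k.choose j : ℝ) * (K.descFactorial j : ℝ) *
            p ^ j * (1 - (k : ℝ) * p) ^ (K - j) := by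
  set S : Finset (Fin (r + 1)) := {j | (j : ℕ) < r}
  have hcard : #S = r := by
    have hS : S = {Fin.last r}ᶜ := by
      ext j
      simp only [S, mem_filter, mem_univ, true_and, mem_compl, mem_singleton, Fin.ext_iff,
        Fin.val_last]
      have := j.isLt
      omega
    simp [hS, card_compl]
  have hsum : ∑ c : Fin (r + 1), (if (c : ℕ) < r then p else 1 - (r : ℝ) * p) = 1 := by
    simp [Fin.sum_univ_castSucc]
  have hevent : ∀ f : Fin K → Fin (r + 1), (∀ j : Fin (r + 1), (j : ℕ) < r →
      ∃ i₁ i₂ : Fin K, i₁ ≠ i₂ ∧ f i₁ = j ∧ f i₂ = j) ↔ ∀ j ∈ S, 1 < #{i | f i = j} := by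
    intro f
    simp only [S, mem_filter, mem_univ, true_and, one_lt_card]
    exact forall₂_congr fun j _ => ⟨fun ⟨a, b, hab, ha, hb⟩ => ⟨a, ha, b, hb, hab⟩,
      fun ⟨a, ha, b, hb, hab⟩ => ⟨a, b, hab, ha, hb⟩⟩
  have key := sum_ite_forall_one_lt_card_filter p K _ S
    (fun c hc => if_pos (by simpa [S] using hc)) hsum
  rw [hcard] at key
  unfold atMostOnceSum at key
  simp only [hevent]
  -- the two sides differ only in the `Decidable` instance of the `if`
  convert key using 3

theorem stmt11 (K r : ℕ) (hr : 1 ≤ r) (p : ℝ) (hp : 0 ≤ p) (hp' : p ≤ 1 / (r : ℝ)) :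
    -- The probability that every one of the r cells receives at least two of the K i.i.d.
    -- trials, where each trial lands in each of the first r cells with probability p and in
    -- the dump cell with probability 1 - r p.
    (∑ f : Fin K → Fin (r + 1),
        (if ∀ j : Fin (r + 1), (j : ℕ) < r →
            ∃ i₁ i₂ : Fin K, i₁ ≠ i₂ ∧ f i₁ = j ∧ f i₂ = j then
          ∏ i : Fin K, (if (f i : ℕ) < r then p else 1 - (r : ℝ) * p)
        else 0))
      = ∑ k ∈ Finset.range (r + 1), (-1 : ℝ) ^ k * (r.choose k : ℝ) *
          ∑ j ∈ Finset.range (k + 1), (k.choose j : ℝ) * (K.descFactorial j : ℝ) *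
            p ^ j * (1 - (k : ℝ) * p) ^ (K - j) :=
  stmt11_general K r p
end

section
/- For integers r ≥ 1 and L ≥ 2r, the polynomial Q(L,p,r) = Σ_{k=0}^{r} (-1)^k C(r,k) Σ_{j=0}^{k} C(k,j) (L!/(L-j)!) p^j (1-kp)^{L-j} satisfies ∂Q(L,p,r)/∂p = r·L·(L-1)·p·(1-p)^{L-2} · Q(L-2, p/(1-p), r-1), and hence Q(L,·,r) is nonnegative and monotonically increasing on p ∈ [0, 1/r]. -/
/-!
Write `S_k(L, p, s) = ∑_j C(k,j) L!/(L-j)! p^j s^(L-j)` (`occupancySum L k p s`), so that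
`Q(L,p,r)` is the alternating binomial sum of `S_k(L, p, 1 - k p)`. Both partial derivatives of
`S_k(L, ·, ·)` are again such sums with one trial fewer, and Pascal's rule in `k` collapses the
total derivative of `S_{m+1}(L, p, 1 - (m+1) p)` to `-(m+1) L (L-1) p S_m(L-2, p, 1 - (m+1) p)`.
Since `S_m(L-2, ·, ·)` is homogeneous of degree `L - 2`, this equals
`(1-p)^(L-2) S_m(L-2, q, 1 - m q)` with `q = p/(1-p)`, and `(m+1) C(r, m+1) = r C(r-1, m)`
reassembles `Q(L-2, q, r-1)`.

Monotonicity then follows by induction on `r`: `p ↦ p/(1-p)` maps `[0, 1/r]` into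
`[0, 1/(r-1)]`, so the derivative is nonnegative there, and nonnegativity follows from
`Q(L, 0, r) = 0`.
-/

open scoped BigOperators

/-- The polynomial
`Q(L,p,r) = ∑_{k=0}^{r} (-1)^k C(r,k) ∑_{j=0}^{k} C(k,j) (L!/(L-j)!) p^j (1-kp)^{L-j}`. -/
noncomputable def Qpoly (L : ℕ) (p : ℝ) (r : ℕ) : ℝ :=
  ∑ k ∈ Finset.range (r + 1), (-1 : ℝ) ^ k * (r.choose k : ℝ) *
    ∑ j ∈ Finset.range (k + 1), (k.choose j : ℝ) * (L.descFactorial j : ℝ) *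
      p ^ j * (1 - (k : ℝ) * p) ^ (L - j)

open Finset

/-- For `s = 1 - k * p` this is the probability that each of `k` given cells receives at most one
of the `L` trials. -/
noncomputable def occupancySum (L k : ℕ) (p s : ℝ) : ℝ :=
  ∑ j ∈ range (k + 1), (k.choose j : ℝ) * (L.descFactorial j : ℝ) * p ^ j * s ^ (L - j)

lemma Qpoly_eq_sum_occupancySum (L r : ℕ) (p : ℝ) :
    Qpoly L p r = ∑ k ∈ range (r + 1), (-1) ^ k * (r.choose k : ℝ) *
      occupancySum L k p (1 - k * p) := rfl

lemma occupancySum_succ_right (n m : ℕ) (p s : ℝ) :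
    occupancySum (n + 1) (m + 1) p s
      = occupancySum (n + 1) m p s + (n + 1) * p * occupancySum n m p s := by
  have h := sum_choose_succ_mul
    (fun j _ => ((n + 1).descFactorial j : ℝ) * p ^ j * s ^ (n + 1 - j)) m
  simp only [← mul_assoc] at h
  rw [occupancySum, occupancySum, occupancySum, h, mul_sum]
  congr 1
  refine sum_congr rfl fun i _ => ?_
  rw [Nat.succ_descFactorial_succ, Nat.add_sub_add_right]
  push_cast
  ring

lemma sum_deriv_fst_occupancySum (n m : ℕ) (p s : ℝ) :
    ∑ j ∈ range (m + 2), ((m + 1).choose j : ℝ) * ((n + 1).descFactorial j : ℝ)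
        * (j * p ^ (j - 1)) * s ^ (n + 1 - j)
      = (n + 1) * (m + 1) * occupancySum n m p s := by
  rw [sum_range_succ', occupancySum, mul_sum]
  simp only [CharP.cast_eq_zero, zero_mul, mul_zero, add_zero]
  refine sum_congr rfl fun i _ => ?_
  have hchoose : ((m + 1).choose (i + 1) : ℝ) * (i + 1) = (m + 1) * m.choose i := by
    exact_mod_cast (Nat.add_one_mul_choose_eq m i).symm
  rw [Nat.succ_descFactorial_succ, Nat.add_sub_cancel, show n + 1 - (i + 1) = n - i by omega]
  push_cast
  linear_combination (n + 1 : ℝ) * (n.descFactorial i) * p ^ i * s ^ (n - i) * hchoose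

lemma sum_deriv_snd_occupancySum (n k : ℕ) (p s : ℝ) :
    ∑ j ∈ range (k + 1), (k.choose j : ℝ) * ((n + 1).descFactorial j : ℝ) * p ^ j
        * (((n + 1 - j : ℕ) : ℝ) * s ^ (n + 1 - j - 1))
      = (n + 1) * occupancySum n k p s := by
  rw [occupancySum, mul_sum]
  refine sum_congr rfl fun j _ => ?_
  have hdesc :
      ((n + 1 - j : ℕ) : ℝ) * (n + 1).descFactorial j = (n + 1) * n.descFactorial j := by
    exact_mod_cast Nat.succ_descFactorial n j
  rw [show n + 1 - j - 1 = n - j by omega]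
  linear_combination (k.choose j : ℝ) * p ^ j * s ^ (n - j) * hdesc

lemma hasDerivAt_occupancySum_comp {σ : ℝ → ℝ} {σ' p : ℝ} (hσ : HasDerivAt σ σ' p)
    (n m : ℕ) :
    HasDerivAt (fun q => occupancySum (n + 1) (m + 1) q (σ q))
      ((n + 1) * ((m + 1) * occupancySum n m p (σ p)
        + σ' * occupancySum n (m + 1) p (σ p))) p := by
  have hterm : ∀ j ∈ range (m + 2), HasDerivAt
      (fun q => ((m + 1).choose j : ℝ) * ((n + 1).descFactorial j : ℝ) * q ^ j
        * σ q ^ (n + 1 - j))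
      (((m + 1).choose j : ℝ) * ((n + 1).descFactorial j : ℝ) * (j * p ^ (j - 1))
          * σ p ^ (n + 1 - j)
        + ((m + 1).choose j : ℝ) * ((n + 1).descFactorial j : ℝ) * p ^ j
          * (((n + 1 - j : ℕ) : ℝ) * σ p ^ (n + 1 - j - 1)) * σ') p := fun j _ =>
    ((((hasDerivAt_pow j p).const_mul _).fun_mul (hσ.fun_pow _))).congr_deriv (by ring)
  have h := HasDerivAt.fun_sum hterm
  rw [sum_add_distrib, sum_deriv_fst_occupancySum, ← sum_mul, sum_deriv_snd_occupancySum] at h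
  exact h.congr_deriv (by ring)

lemma occupancySum_mul_mul (n k : ℕ) (c p s : ℝ) :
    occupancySum n k (c * p) (c * s) = c ^ n * occupancySum n k p s := by
  rw [occupancySum, occupancySum, mul_sum]
  refine sum_congr rfl fun j _ => ?_
  rcases le_or_gt j n with hjn | hnj
  · rw [mul_pow, mul_pow, ← pow_sub_mul_pow c hjn]
    ring
  · simp [Nat.descFactorial_eq_zero_iff_lt.mpr hnj]

lemma occupancySum_zero_one (n k : ℕ) : occupancySum n k 0 1 = 1 := by
  rw [occupancySum, sum_eq_single 0] <;> simp +contextual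

lemma hasDerivAt_occupancySum_one_sub_mul (n m : ℕ) (p : ℝ) :
    HasDerivAt (fun q => occupancySum (n + 2) (m + 1) q (1 - (m + 1) * q))
      (-((m + 1) * (n + 2) * (n + 1) * p) * occupancySum n m p (1 - (m + 1) * p)) p := by
  have hσ : HasDerivAt (fun q : ℝ => 1 - (m + 1) * q) (-(m + 1)) p := by
    simpa using ((hasDerivAt_id p).const_mul ((m : ℝ) + 1)).const_sub 1
  have h := hasDerivAt_occupancySum_comp hσ (n + 1) m
  rw [occupancySum_succ_right] at h
  exact h.congr_deriv (by push_cast; ring)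

lemma Qpoly_zero_cells (L : ℕ) (p : ℝ) : Qpoly L p 0 = 1 := by
  simp [Qpoly]

lemma Qpoly_at_zero (L : ℕ) {r : ℕ} (hr : r ≠ 0) : Qpoly L 0 r = 0 := by
  simp only [Qpoly_eq_sum_occupancySum, mul_zero, sub_zero, occupancySum_zero_one, mul_one]
  exact_mod_cast Int.alternating_sum_range_choose_of_ne hr

lemma continuous_Qpoly (L r : ℕ) : Continuous fun p => Qpoly L p r := by
  unfold Qpoly
  fun_prop

lemma one_sub_pow_mul_Qpoly (n m : ℕ) {p : ℝ} (hp : p ≠ 1) :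
    (1 - p) ^ n * Qpoly n (p / (1 - p)) m
      = ∑ i ∈ range (m + 1),
          (-1) ^ i * (m.choose i : ℝ) * occupancySum n i p (1 - (i + 1) * p) := by
  have hp' : 1 - p ≠ 0 := sub_ne_zero.mpr hp.symm
  rw [Qpoly_eq_sum_occupancySum, mul_sum]
  refine sum_congr rfl fun i _ => ?_
  rw [mul_left_comm, ← occupancySum_mul_mul, mul_div_cancel₀ _ hp']
  congr 2
  field_simp
  ring

lemma hasDerivAt_Qpoly (n m : ℕ) {p : ℝ} (hp : p ≠ 1) :
    HasDerivAt (fun q => Qpoly (n + 2) q (m + 1))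
      ((m + 1) * (n + 2) * (n + 1) * p * ((1 - p) ^ n * Qpoly n (p / (1 - p)) m)) p := by
  have hterm : ∀ i ∈ range (m + 1), HasDerivAt
      (fun q => (-1) ^ (i + 1) * ((m + 1).choose (i + 1) : ℝ)
        * occupancySum (n + 2) (i + 1) q (1 - (i + 1 : ℕ) * q))
      ((m + 1) * (n + 2) * (n + 1) * p
        * ((-1) ^ i * (m.choose i : ℝ) * occupancySum n i p (1 - (i + 1) * p))) p := by
    intro i _
    have hchoose : ((m + 1).choose (i + 1) : ℝ) * (i + 1) = (m + 1) * m.choose i := by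
      exact_mod_cast (Nat.add_one_mul_choose_eq m i).symm
    push_cast
    refine ((hasDerivAt_occupancySum_one_sub_mul n i p).const_mul _).congr_deriv ?_
    linear_combination
      (-1) ^ i * (n + 2) * (n + 1) * p * occupancySum n i p (1 - (i + 1) * p) * hchoose
  have hQ : (fun q => Qpoly (n + 2) q (m + 1)) = fun q => ∑ i ∈ range (m + 1),
      (-1) ^ (i + 1) * ((m + 1).choose (i + 1) : ℝ)
        * occupancySum (n + 2) (i + 1) q (1 - (i + 1 : ℕ) * q) + 1 := by
    funext q
    rw [Qpoly_eq_sum_occupancySum, sum_range_succ']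
    simp [occupancySum]
  rw [hQ, one_sub_pow_mul_Qpoly n m hp, mul_sum]
  exact (HasDerivAt.fun_sum hterm).add_const 1

lemma div_one_sub_mem_Icc {a x : ℝ} (ha : 0 < a) (hx : x ∈ Set.Icc 0 (1 / (a + 1))) :
    x / (1 - x) ∈ Set.Icc 0 (1 / a) := by
  obtain ⟨hx0, hxa⟩ := hx
  rw [le_div_iff₀ (by positivity)] at hxa
  have hx1 : 0 < 1 - x := by nlinarith
  refine ⟨div_nonneg hx0 hx1.le, ?_⟩
  rw [div_le_div_iff₀ hx1 ha]
  linarith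

theorem Qpoly_nonneg_and_monotoneOn (r L : ℕ) (hL : 2 * r ≤ L) :
    (∀ p ∈ Set.Icc (0 : ℝ) (1 / r), 0 ≤ Qpoly L p r)
      ∧ MonotoneOn (fun p => Qpoly L p r) (Set.Icc 0 (1 / r)) := by
  induction r generalizing L with
  | zero =>
    simp only [Qpoly_zero_cells]
    exact ⟨fun _ _ => zero_le_one, monotoneOn_const⟩
  | succ m ih =>
    obtain ⟨n, rfl⟩ : ∃ n, L = n + 2 := ⟨L - 2, by omega⟩
    push_cast
    have hlt_one : ∀ x ∈ Set.Ioo (0 : ℝ) (1 / (m + 1)), x < 1 := fun x hx =>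
      hx.2.trans_le (div_le_one_of_le₀ (by linarith [m.cast_nonneg (α := ℝ)]) (by positivity))
    have hderiv_nonneg : ∀ x ∈ Set.Ioo (0 : ℝ) (1 / (m + 1)),
        0 ≤ (m + 1) * (n + 2) * (n + 1) * x * ((1 - x) ^ n * Qpoly n (x / (1 - x)) m) := by
      intro x hx
      have hQ : 0 ≤ Qpoly n (x / (1 - x)) m := by
        rcases Nat.eq_zero_or_pos m with rfl | hm
        · rw [Qpoly_zero_cells]; exact zero_le_one
        · exact (ih n (by omega)).1 _
            (div_one_sub_mem_Icc (by exact_mod_cast hm) (Set.Ioo_subset_Icc_self hx))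
      have h1x : 0 ≤ 1 - x := by linarith [hlt_one x hx]
      have hx0 : 0 ≤ x := hx.1.le
      positivity
    have hmono : MonotoneOn (fun p => Qpoly (n + 2) p (m + 1)) (Set.Icc 0 (1 / (m + 1))) := by
      refine monotoneOn_of_hasDerivWithinAt_nonneg (convex_Icc _ _)
        (continuous_Qpoly _ _).continuousOn (fun x hx => ?_) (by rwa [interior_Icc])
      rw [interior_Icc] at hx
      exact (hasDerivAt_Qpoly n m (hlt_one x hx).ne).hasDerivWithinAt
    refine ⟨fun p hp => ?_, hmono⟩
    rw [← Qpoly_at_zero (n + 2) m.succ_ne_zero]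
    exact hmono ⟨le_rfl, by positivity⟩ hp hp.1

theorem stmt12 (L r : ℕ) (hr : 1 ≤ r) (hL : 2 * r ≤ L) :
    (∀ p : ℝ, p ≠ 1 →
        HasDerivAt (fun q : ℝ => Qpoly L q r)
          ((r : ℝ) * (L : ℝ) * ((L : ℝ) - 1) * p * (1 - p) ^ (L - 2)
            * Qpoly (L - 2) (p / (1 - p)) (r - 1)) p)
      ∧ (∀ p ∈ Set.Icc (0 : ℝ) (1 / (r : ℝ)), 0 ≤ Qpoly L p r)
      ∧ MonotoneOn (fun p : ℝ => Qpoly L p r) (Set.Icc (0 : ℝ) (1 / (r : ℝ))) := by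
  obtain ⟨n, rfl⟩ : ∃ n, L = n + 2 := ⟨L - 2, by omega⟩
  obtain ⟨m, rfl⟩ : ∃ m, r = m + 1 := ⟨r - 1, by omega⟩
  refine ⟨fun p hp => ?_, Qpoly_nonneg_and_monotoneOn (m + 1) (n + 2) hL⟩
  convert hasDerivAt_Qpoly n m hp using 1
  push_cast
  ring
end

section
/- Let Φ ∈ R^{M×K}, let T be a subset of column indices with |T| = k, let d = dim(range(Φ_T)), and let P_T⊥ be the orthogonal projection onto the orthogonal complement of range(Φ_T). Let D be the diagonal matrix with entries 1/‖P_T⊥ φ_i‖ for i ∉ T. If σ_min(Φ) ≥ σ and max_{i∉T} ‖P_T⊥ φ_i‖² ≤ (1 - d/M)(1 - δ) ≤ 1 - δ, then for every unit vector x ∈ R^{K-k}, ‖P_T⊥ Φ_{T^c} D x‖ ≥ σ/√(1-δ) ≥ σ. -/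
open scoped BigOperators

/-- The smallest singular value of a matrix, as the infimum of `‖A x‖` over unit vectors `x`. -/
noncomputable def sigmaMin {m : Type*} {n : Type*} [Fintype m] [Fintype n]
    (A : Matrix m n ℝ) : ℝ :=
  ⨅ x : {x : n → ℝ // ∑ i, x i ^ 2 = 1}, Real.sqrt (∑ i, (A.mulVec x.1 i) ^ 2)

lemma sigmaMin_nonneg {m : Type*} {n : Type*} [Fintype m] [Fintype n]
    (A : Matrix m n ℝ) : 0 ≤ sigmaMin A :=
  Real.iInf_nonneg fun _ => Real.sqrt_nonneg _

lemma sigmaMin_mul_le {m : Type*} {n : Type*} [Fintype m] [Fintype n]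
    (A : Matrix m n ℝ) (v : n → ℝ) :
    sigmaMin A * Real.sqrt (∑ i, v i ^ 2) ≤ Real.sqrt (∑ i, (A.mulVec v i) ^ 2) := by
  rcases eq_or_ne (∑ i, v i ^ 2) 0 with h0 | h0
  · rw [h0, Real.sqrt_zero, mul_zero]; exact Real.sqrt_nonneg _
  · have hpos : 0 < ∑ i, v i ^ 2 :=
      lt_of_le_of_ne (Finset.sum_nonneg fun i _ => sq_nonneg (v i)) (Ne.symm h0)
    set c : ℝ := Real.sqrt (∑ i, v i ^ 2) with hc
    have hcpos : 0 < c := Real.sqrt_pos.2 hpos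
    have hc2 : c ^ 2 = ∑ i, v i ^ 2 := Real.sq_sqrt hpos.le
    have hunit : ∑ i, (c⁻¹ * v i) ^ 2 = 1 := by
      have h : ∑ i, (c⁻¹ * v i) ^ 2 = c⁻¹ ^ 2 * ∑ i, v i ^ 2 := by
        rw [Finset.mul_sum]; exact Finset.sum_congr rfl fun i _ => by ring
      rw [h, ← hc2]
      field_simp
    have hbdd : BddBelow (Set.range fun x : {x : n → ℝ // ∑ i, x i ^ 2 = 1} =>
        Real.sqrt (∑ i, (A.mulVec x.1 i) ^ 2)) :=
      ⟨0, by rintro y ⟨x, rfl⟩; exact Real.sqrt_nonneg _⟩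
    have hle : sigmaMin A ≤ Real.sqrt (∑ i, (A.mulVec (fun j => c⁻¹ * v j) i) ^ 2) :=
      ciInf_le hbdd ⟨fun j => c⁻¹ * v j, hunit⟩
    have hmv : ∀ i, A.mulVec (fun j => c⁻¹ * v j) i = c⁻¹ * A.mulVec v i := by
      intro i
      have h : (fun j => c⁻¹ * v j) = c⁻¹ • v := by funext j; simp
      rw [h, Matrix.mulVec_smul]; simp
    have hsum : ∑ i, (A.mulVec (fun j => c⁻¹ * v j) i) ^ 2
        = c⁻¹ ^ 2 * ∑ i, (A.mulVec v i) ^ 2 := by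
      rw [Finset.mul_sum]
      exact Finset.sum_congr rfl fun i _ => by rw [hmv]; ring
    rw [hsum, Real.sqrt_mul (by positivity), Real.sqrt_sq_eq_abs,
      abs_of_pos (by positivity)] at hle
    calc sigmaMin A * c ≤ (c⁻¹ * Real.sqrt (∑ i, (A.mulVec v i) ^ 2)) * c :=
          mul_le_mul_of_nonneg_right hle hcpos.le
      _ = Real.sqrt (∑ i, (A.mulVec v i) ^ 2) := by field_simp

theorem stmt16 {M K k d : ℕ} (Φ : Matrix (Fin M) (Fin K) ℝ)
    (T : Finset (Fin K)) (hT : T.card = k)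
    (P : Matrix (Fin M) (Fin M) ℝ)
    (hPsymm : P.transpose = P) (hPidem : P * P = P)
    -- P is the orthogonal projection onto the orthogonal complement of range(Φ_T):
    (hker : ∀ v : Fin M → ℝ,
      P.mulVec v = 0 ↔ v ∈ Submodule.span ℝ (Set.range fun j : T => fun i => Φ i j))
    (hd : Module.finrank ℝ (Submodule.span ℝ (Set.range fun j : T => fun i => Φ i j)) = d)
    (σ δ : ℝ) (hσ0 : 0 ≤ σ) (hδ : δ ∈ Set.Ioo (0 : ℝ) 1)
    (hσ : σ ≤ sigmaMin Φ)
    (hne : ∀ i : ↥(Tᶜ : Finset (Fin K)), P.mulVec (fun l => Φ l i) ≠ 0)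
    (hnorm : ∀ i : ↥(Tᶜ : Finset (Fin K)),
      ∑ m, (P.mulVec (fun l => Φ l i) m) ^ 2 ≤ (1 - (d : ℝ) / (M : ℝ)) * (1 - δ))
    (hnorm' : (1 - (d : ℝ) / (M : ℝ)) * (1 - δ) ≤ 1 - δ) :
    ∀ x : ↥(Tᶜ : Finset (Fin K)) → ℝ, ∑ i, x i ^ 2 = 1 →
      (σ / Real.sqrt (1 - δ)
          ≤ Real.sqrt (∑ m,
              ((P * Φ.submatrix id (fun j : ↥(Tᶜ : Finset (Fin K)) => (j : Fin K))
                * Matrix.diagonal fun i : ↥(Tᶜ : Finset (Fin K)) =>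
                    1 / Real.sqrt (∑ m, (P.mulVec (fun l => Φ l i) m) ^ 2)).mulVec x m) ^ 2))
        ∧ σ ≤ σ / Real.sqrt (1 - δ) := by
  obtain ⟨hδ0, hδ1⟩ := hδ
  have h1δ : (0:ℝ) < 1 - δ := by linarith
  intro x hx
  set n : ↥(Tᶜ : Finset (Fin K)) → ℝ :=
    fun i => ∑ m, (P.mulVec (fun l => Φ l i) m) ^ 2 with hn
  have hnpos : ∀ i, 0 < n i := by
    intro i
    have h0 : 0 ≤ n i :=
      Finset.sum_nonneg fun m _ => sq_nonneg (P.mulVec (fun l => Φ l i) m)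
    rcases h0.lt_or_eq with h | h
    · exact h
    · exfalso
      apply hne i
      funext m
      have hm := (Finset.sum_eq_zero_iff_of_nonneg (fun m _ => sq_nonneg
        (P.mulVec (fun l => Φ l i) m))).1 h.symm m (Finset.mem_univ m)
      exact pow_eq_zero_iff (n := 2) (by norm_num) |>.1 hm
  set z : Fin K → ℝ := fun j =>
    if h : j ∈ (Tᶜ : Finset (Fin K)) then (1 / Real.sqrt (n ⟨j, h⟩)) * x ⟨j, h⟩ else 0 with hz
  have hz0 : ∀ j, j ∉ (Tᶜ : Finset (Fin K)) → z j = 0 := by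
    intro j h; simp only [hz]; rw [dif_neg h]
  have hzT : ∀ j : ↥(Tᶜ : Finset (Fin K)),
      z (j : Fin K) = (1 / Real.sqrt (n j)) * x j := by
    intro j; simp only [hz]; rw [dif_pos j.2, Subtype.coe_eta]
  obtain ⟨u, hu⟩ : ∃ u : Fin M → ℝ, u = Φ.mulVec z := ⟨_, rfl⟩
  -- the vector in question equals P *ᵥ u
  have hmid : (Φ.submatrix id (fun j : ↥(Tᶜ : Finset (Fin K)) => (j : Fin K))).mulVec
      (fun i => (1 / Real.sqrt (n i)) * x i) = Φ.mulVec z := by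
    funext i
    simp only [Matrix.mulVec, dotProduct, Matrix.submatrix_apply, id_eq]
    rw [← Finset.sum_subset (Finset.subset_univ (Tᶜ : Finset (Fin K)))
      (fun j _ hj => by rw [hz0 j hj, mul_zero]),
      ← Finset.sum_attach (Tᶜ : Finset (Fin K)) (fun j => Φ i j * z j),
      ← Finset.univ_eq_attach]
    exact Finset.sum_congr rfl fun j _ => by rw [hzT j]
  have hvec : (P * Φ.submatrix id (fun j : ↥(Tᶜ : Finset (Fin K)) => (j : Fin K))
      * Matrix.diagonal fun i : ↥(Tᶜ : Finset (Fin K)) =>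
          1 / Real.sqrt (∑ m, (P.mulVec (fun l => Φ l i) m) ^ 2)).mulVec x
      = P.mulVec u := by
    rw [← Matrix.mulVec_mulVec, ← Matrix.mulVec_mulVec]
    have hdiag : (Matrix.diagonal fun i : ↥(Tᶜ : Finset (Fin K)) =>
        1 / Real.sqrt (∑ m, (P.mulVec (fun l => Φ l i) m) ^ 2)).mulVec x
        = fun i => (1 / Real.sqrt (n i)) * x i := by
      funext i
      exact Matrix.mulVec_diagonal _ _ _
    rw [hdiag, hmid, ← hu]
  -- find w supported on T with P *ᵥ u = Φ *ᵥ (z - w)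
  have hPu : P.mulVec (u - P.mulVec u) = 0 := by
    have h : P.mulVec (P.mulVec u) = P.mulVec u := by
      rw [Matrix.mulVec_mulVec, hPidem]
    rw [Matrix.mulVec_sub, h, sub_self]
  have hmem := (hker _).1 hPu
  rw [Submodule.mem_span_range_iff_exists_fun] at hmem
  obtain ⟨c, hc⟩ := hmem
  set w : Fin K → ℝ := fun j => if h : j ∈ T then c ⟨j, h⟩ else 0 with hw
  have hw0 : ∀ j, j ∉ T → w j = 0 := by
    intro j h; simp only [hw]; rw [dif_neg h]
  have hwT : ∀ j : ↥T, w (j : Fin K) = c j := by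
    intro j; simp only [hw]; rw [dif_pos j.2, Subtype.coe_eta]
  have hΦw : Φ.mulVec w = u - P.mulVec u := by
    rw [← hc]
    funext i
    simp only [Matrix.mulVec, dotProduct]
    rw [Finset.sum_apply,
      ← Finset.sum_subset (Finset.subset_univ T)
        (fun j _ hj => by rw [hw0 j hj, mul_zero]),
      ← Finset.sum_attach T (fun j => Φ i j * w j),
      ← Finset.univ_eq_attach]
    apply Finset.sum_congr rfl
    intro j _
    simp only [Pi.smul_apply, smul_eq_mul]
    rw [hwT j, mul_comm]
  have hkey : P.mulVec u = Φ.mulVec (z - w) := by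
    rw [Matrix.mulVec_sub, hΦw, ← hu]
    abel
  -- lower bound on ∑ (z - w)^2
  have hsum1 : ∑ j ∈ (Tᶜ : Finset (Fin K)), z j ^ 2 ≤ ∑ j, (z j - w j) ^ 2 := by
    have hwz : ∀ j ∈ (Tᶜ : Finset (Fin K)), z j ^ 2 = (z j - w j) ^ 2 := by
      intro j hj
      rw [hw0 j (Finset.mem_compl.1 hj), sub_zero]
    calc ∑ j ∈ (Tᶜ : Finset (Fin K)), z j ^ 2
        = ∑ j ∈ (Tᶜ : Finset (Fin K)), (z j - w j) ^ 2 := Finset.sum_congr rfl hwz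
      _ ≤ ∑ j, (z j - w j) ^ 2 :=
          Finset.sum_le_sum_of_subset_of_nonneg (Finset.subset_univ _)
            (fun j _ _ => sq_nonneg _)
  have hsum2 : 1 / (1 - δ) ≤ ∑ j ∈ (Tᶜ : Finset (Fin K)), z j ^ 2 := by
    rw [← Finset.sum_attach (Tᶜ : Finset (Fin K)) (fun j => z j ^ 2), ← Finset.univ_eq_attach]
    have hterm : ∀ i : ↥(Tᶜ : Finset (Fin K)), x i ^ 2 / (1 - δ) ≤ z (i : Fin K) ^ 2 := by
      intro i
      have hzi : z (i : Fin K) ^ 2 = x i ^ 2 / n i := by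
        rw [hzT i, mul_pow, div_pow, one_pow, Real.sq_sqrt (hnpos i).le]
        ring
      rw [hzi]
      apply div_le_div_of_nonneg_left (sq_nonneg _) (hnpos i)
      exact le_trans (hnorm i) hnorm'
    calc 1 / (1 - δ) = (∑ i, x i ^ 2) / (1 - δ) := by rw [hx]
      _ = ∑ i : ↥(Tᶜ : Finset (Fin K)), x i ^ 2 / (1 - δ) := Finset.sum_div _ _ _
      _ ≤ ∑ i : ↥(Tᶜ : Finset (Fin K)), z (i : Fin K) ^ 2 :=
          Finset.sum_le_sum fun i _ => hterm i
  have hfinal : σ / Real.sqrt (1 - δ) ≤ Real.sqrt (∑ m, (P.mulVec u m) ^ 2) := by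
    have h1 : Real.sqrt (1 / (1 - δ)) ≤ Real.sqrt (∑ j, ((z - w) j) ^ 2) := by
      apply Real.sqrt_le_sqrt
      simp only [Pi.sub_apply]
      exact le_trans hsum2 hsum1
    have h2 : sigmaMin Φ * Real.sqrt (∑ j, ((z - w) j) ^ 2)
        ≤ Real.sqrt (∑ i, (Φ.mulVec (z - w) i) ^ 2) := sigmaMin_mul_le Φ (z - w)
    have h3 : σ / Real.sqrt (1 - δ) = σ * Real.sqrt (1 / (1 - δ)) := by
      rw [one_div, Real.sqrt_inv, div_eq_mul_inv]
    calc σ / Real.sqrt (1 - δ) = σ * Real.sqrt (1 / (1 - δ)) := h3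
      _ ≤ sigmaMin Φ * Real.sqrt (∑ j, ((z - w) j) ^ 2) :=
          mul_le_mul hσ h1 (Real.sqrt_nonneg _) (sigmaMin_nonneg Φ)
      _ ≤ Real.sqrt (∑ i, (Φ.mulVec (z - w) i) ^ 2) := h2
      _ = Real.sqrt (∑ m, (P.mulVec u m) ^ 2) := by rw [← hkey]
  constructor
  · rw [hvec]
    exact hfinal
  · rw [le_div_iff₀ (Real.sqrt_pos.2 h1δ)]
    calc σ * Real.sqrt (1 - δ) ≤ σ * 1 :=
          mul_le_mul_of_nonneg_left (Real.sqrt_le_one.2 (by linarith)) hσ0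
      _ = σ := mul_one σ
end
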